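/- arXiv:1611.05161 — 6 statements merged into one kernel-verified Lean document; each statement's English description precedes it below -/
import Mathlib

section
/- Let a₁ and a₂ be nonempty finite words over an alphabet, with |a₁| < |a₂|. Then a₁ ++ a₁ ++ a₂ = a₁ ++ a₂ ++ a₁ if and only if there exists a word S and positive natural numbers n, r such that a₁ = S^n and a₂ = S^r. -/
/-- `wpow S n` is the concatenation of `n` copies of the word `S`. -/
def wpow {α : Type*} (S : List α) (n : ℕ) : List α := (List.replicate n S).flatten

lemma wpow_zero {α : Type*} (S : List α) : wpow S 0 = [] := rfl

lemma wpow_one {α : Type*} (S : List α) : wpow S 1 = S := by simp [wpow]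

lemma wpow_add {α : Type*} (S : List α) (m n : ℕ) :
    wpow S (m + n) = wpow S m ++ wpow S n := by
  rw [wpow, wpow, wpow, ← List.flatten_append, ← List.replicate_add]

lemma comm_pow_aux {α : Type*} :
    ∀ (N : ℕ) (a b : List α), a.length + b.length ≤ N → a ++ b = b ++ a →
      ∃ S n m, a = wpow S n ∧ b = wpow S m := by
  intro N
  induction N with
  | zero =>
    intro a b hlen _
    have ha : a = [] := by
      cases a with
      | nil => rfl
      | cons x xs => simp at hlen
    have hb : b = [] := by
      cases b with
      | nil => rfl
      | cons x xs => rw [ha] at hlen; simp at hlen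
    exact ⟨[], 0, 0, by simp [ha, wpow_zero], by simp [hb, wpow_zero]⟩
  | succ N ih =>
    intro a b hlen hcomm
    rcases eq_or_ne a [] with ha | ha
    · exact ⟨b, 0, 1, by simp [ha, wpow_zero], by simp [wpow_one]⟩
    rcases eq_or_ne b [] with hb | hb
    · exact ⟨a, 1, 0, by simp [wpow_one], by simp [hb, wpow_zero]⟩
    have hapos : 0 < a.length := List.length_pos_iff.mpr ha
    have hbpos : 0 < b.length := List.length_pos_iff.mpr hb
    rcases le_total a.length b.length with hab | hab
    · -- a is a prefix of b : b = a ++ c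
      have htake : a = b.take a.length := by
        have h := congrArg (List.take a.length) hcomm
        rwa [List.take_left, List.take_append_of_le_length hab] at h
      set c := b.drop a.length with hc
      have hb' : b = a ++ c := by
        conv_lhs => rw [← List.take_append_drop a.length b]
        rw [← htake]
      have hcomm' : a ++ c = c ++ a := by
        have : a ++ (a ++ c) = (a ++ c) ++ a := by rw [← hb']; exact hcomm
        rw [List.append_assoc] at this
        exact List.append_cancel_left this
      have hclen : a.length + c.length ≤ N := by
        have : b.length = a.length + c.length := by rw [hb']; simp
        omega
      obtain ⟨S, n, m, hS1, hS2⟩ := ih a c hclen hcomm'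
      exact ⟨S, n, n + m, hS1, by rw [hb', hS1, hS2, wpow_add]⟩
    · -- b is a prefix of a : a = b ++ c
      have htake : b = a.take b.length := by
        have h := congrArg (List.take b.length) hcomm.symm
        rwa [List.take_left, List.take_append_of_le_length hab] at h
      set c := a.drop b.length with hc
      have ha' : a = b ++ c := by
        conv_lhs => rw [← List.take_append_drop b.length a]
        rw [← htake]
      have hcomm' : b ++ c = c ++ b := by
        have : b ++ (b ++ c) = (b ++ c) ++ b := by rw [← ha']; exact hcomm.symm
        rw [List.append_assoc] at this
        exact List.append_cancel_left this
      have hclen : b.length + c.length ≤ N := by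
        have : a.length = b.length + c.length := by rw [ha']; simp
        omega
      obtain ⟨S, n, m, hS1, hS2⟩ := ih b c hclen hcomm'
      exact ⟨S, n + m, n, by rw [ha', hS1, hS2, wpow_add], hS1⟩

/-- The Common Divider Lemma: for nonempty words with |a₁| < |a₂|,
`a₁ ++ a₁ ++ a₂ = a₁ ++ a₂ ++ a₁` iff `a₁` and `a₂` are powers of a common word. -/
theorem common_divider {α : Type*} (a₁ a₂ : List α)
    (h₁ : a₁ ≠ []) (h₂ : a₂ ≠ []) (hlen : a₁.length < a₂.length) :
    a₁ ++ a₁ ++ a₂ = a₁ ++ a₂ ++ a₁ ↔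
      ∃ (S : List α) (n r : ℕ), 0 < n ∧ 0 < r ∧ a₁ = wpow S n ∧ a₂ = wpow S r := by
  constructor
  · intro h
    rw [List.append_assoc, List.append_assoc] at h
    have hcomm : a₁ ++ a₂ = a₂ ++ a₁ := List.append_cancel_left h
    obtain ⟨S, n, m, hS1, hS2⟩ :=
      comm_pow_aux (a₁.length + a₂.length) a₁ a₂ le_rfl hcomm
    have hn : 0 < n := by
      rcases Nat.eq_zero_or_pos n with h0 | h0
      · exact absurd (by rw [hS1, h0, wpow_zero]) h₁
      · exact h0
    have hm : 0 < m := by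
      rcases Nat.eq_zero_or_pos m with h0 | h0
      · exact absurd (by rw [hS2, h0, wpow_zero]) h₂
      · exact h0
    exact ⟨S, n, m, hn, hm, hS1, hS2⟩
  · rintro ⟨S, n, r, -, -, rfl, rfl⟩
    rw [List.append_assoc, List.append_assoc, ← wpow_add, ← wpow_add, ← wpow_add, ← wpow_add]
    congr 1
    omega
end

section
/- Let M : ℕ → Bool be an incremental sequence: for every block of ℓ consecutive equal values x ending at position i, there exists ℓ' > ℓ and a position j > i where a block of ℓ' consecutive values all equal to (not x) begins. Then for all indices i < j there exists t > j such that for every r > t, there is no word Seq and positive naturals n, k with M[i,j] = Seq^n and M[j,r] = Seq^k, where M[a,b] denotes the subword of M from position a to position b. -/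
/-- `Block M x s ℓ` : `ℓ` consecutive values of `M` equal to `x`, starting at `s`. -/
def Block (M : ℕ → Bool) (x : Bool) (s ℓ : ℕ) : Prop := ∀ k < ℓ, M (s + k) = x

/-- `M` is incremental. -/
def Incremental (M : ℕ → Bool) : Prop :=
  ∀ x s ℓ, 0 < ℓ → Block M x s ℓ →
    ∃ ℓ' > ℓ, ∃ j, j > s + ℓ ∧ Block M (!x) j ℓ'

/-- `word M a b` : the finite word of entries of `M` at positions `a, …, b-1`. -/
def word (M : ℕ → Bool) (a b : ℕ) : List Bool :=
  (List.range (b - a)).map (fun k => M (a + k))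

lemma blocks_exist (M : ℕ → Bool) (hM : Incremental M) :
    ∀ n N, ∃ x s ℓ, s > N ∧ ℓ ≥ n ∧ 0 < ℓ ∧ Block M x s ℓ := by
  intro n
  induction n with
  | zero =>
    intro N
    refine ⟨M (N+1), N+1, 1, by omega, by omega, by omega, ?_⟩
    intro kk hk
    have : kk = 0 := by omega
    subst this; rfl
  | succ n ih =>
    intro N
    obtain ⟨x, s, ℓ, hs, hℓ, hpos, hb⟩ := ih N
    obtain ⟨ℓ', hℓ', j, hj, hb'⟩ := hM x s ℓ hpos hb
    exact ⟨!x, j, ℓ', by omega, by omega, by omega, hb'⟩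

lemma block_of (M : ℕ → Bool) (hM : Incremental M) (x : Bool) :
    ∀ n N, ∃ s > N, ∃ ℓ, ℓ ≥ n ∧ 0 < ℓ ∧ Block M x s ℓ := by
  intro n N
  obtain ⟨x', s, ℓ, hs, hℓ, hpos, hb⟩ := blocks_exist M hM n N
  by_cases hx : x' = x
  · exact ⟨s, hs, ℓ, hℓ, hpos, hx ▸ hb⟩
  · obtain ⟨ℓ', hℓ', j, hj, hb'⟩ := hM x' s ℓ hpos hb
    have hxx : (!x') = x := by cases x' <;> cases x <;> simp_all
    exact ⟨j, by omega, ℓ', by omega, by omega, hxx ▸ hb'⟩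

lemma word_length (M : ℕ → Bool) (a b : ℕ) : (word M a b).length = b - a := by
  simp [word]

lemma word_getElem? (M : ℕ → Bool) (a b q : ℕ) (h : q < b - a) :
    (word M a b)[q]? = some (M (a + q)) := by
  simp [word, h]

lemma word_append (M : ℕ → Bool) (a b c : ℕ) (hab : a ≤ b) (hbc : b ≤ c) :
    word M a c = word M a b ++ word M b c := by
  apply List.ext_getElem?
  intro q
  by_cases hq : q < c - a
  · rw [word_getElem? M a c q hq]
    by_cases hq2 : q < b - a
    · rw [List.getElem?_append_left (by rw [word_length]; exact hq2),
        word_getElem? M a b q hq2]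
    · rw [List.getElem?_append_right (by rw [word_length]; omega), word_length,
        word_getElem? M b c _ (by omega)]
      congr 2
      omega
  · rw [List.getElem?_eq_none (by rw [word_length]; omega),
      List.getElem?_eq_none (by simp [word_length]; omega)]

lemma wpow_length {α : Type*} (S : List α) (n : ℕ) : (wpow S n).length = n * S.length := by
  induction n with
  | zero => simp [wpow]
  | succ n ih =>
    simp only [wpow, List.replicate_succ, List.flatten_cons, List.length_append]
    rw [show (List.replicate n S).flatten = wpow S n from rfl, ih]
    ring

lemma wpow_getElem? {α : Type*} (S : List α) :
    ∀ n q, q < n * S.length → (wpow S n)[q]? = S[q % S.length]? := by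
  intro n
  induction n with
  | zero => intro q hq; omega
  | succ n ih =>
    intro q hq
    have hp : 0 < S.length := by by_contra h; simp at h; simp [h] at hq
    rw [show wpow S (n+1) = S ++ wpow S n by
      simp [wpow, List.replicate_succ]]
    have hq' : q < n * S.length + S.length := by
      have : (n + 1) * S.length = n * S.length + S.length := by ring
      omega
    by_cases h : q < S.length
    · rw [List.getElem?_append_left h, Nat.mod_eq_of_lt h]
    · push_neg at h
      rw [List.getElem?_append_right h, ih (q - S.length) (by omega)]
      congr 1
      conv_rhs => rw [show q = (q - S.length) + S.length by omega]
      rw [Nat.add_mod_right]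

/-- Lemma 20: for an incremental sequence, any subword `M[i,j]` has, from some
point on, no common divider with the subsequent subword `M[j,r]`. -/
theorem incremental_no_common_divider (M : ℕ → Bool) (hM : Incremental M) :
    ∀ i j, i < j → ∃ t > j, ∀ r > t,
      ¬ ∃ (Seq : List Bool) (n k : ℕ), 0 < n ∧ 0 < k ∧
          word M i j = wpow Seq n ∧ word M j r = wpow Seq k := by
  intro i j hij
  obtain ⟨s0, hs0, ℓ0, hℓ0, hℓ0pos, hb0⟩ := block_of M hM false (j - i) j
  obtain ⟨s1, hs1, ℓ1, hℓ1, hℓ1pos, hb1⟩ := block_of M hM true (j - i) s0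
  refine ⟨j + s0 + ℓ0 + s1 + ℓ1, by omega, ?_⟩
  rintro r hr ⟨Seq, n, k, hn, hk, h1, h2⟩
  set p := Seq.length with hp_def
  have hij' : i ≤ j := by omega
  have hjr : j ≤ r := by omega
  have hlen1 : j - i = n * p := by
    have := congrArg List.length h1
    rwa [word_length, wpow_length] at this
  have hp : 0 < p := by
    rcases Nat.eq_zero_or_pos p with h | h
    · rw [h, Nat.mul_zero] at hlen1; omega
    · exact h
  have hpd : p ≤ j - i := by
    rw [hlen1]; exact Nat.le_mul_of_pos_left p hn
  have hword : word M i r = wpow Seq (n + k) := by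
    rw [word_append M i j r hij' hjr, h1, h2]
    simp only [wpow, List.replicate_add, List.flatten_append]
  have hlen : r - i = (n + k) * p := by
    have := congrArg List.length hword
    rwa [word_length, wpow_length] at this
  have hMq : ∀ q, q < r - i → some (M (i + q)) = Seq[q % p]? := by
    intro q hq
    rw [← word_getElem? M i r q hq, hword, wpow_getElem? Seq (n+k) q (by rw [← hp_def, ← hlen]; exact hq)]
  have hper : ∀ m, i ≤ m → m + p < r → M m = M (m + p) := by
    intro m him hmr
    have h1 := hMq (m - i) (by omega)
    have h2 := hMq (m - i + p) (by omega)
    rw [Nat.add_mod_right] at h2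
    rw [show i + (m - i) = m by omega] at h1
    rw [show i + (m - i + p) = m + p by omega] at h2
    exact Option.some.inj (h1.trans h2.symm)
  -- everything in [s0, r) is false
  have hall : ∀ m, s0 ≤ m → m < r → M m = false := by
    intro m
    induction m using Nat.strong_induction_on with
    | _ m ih =>
      intro hsm hmr
      by_cases h : m < s0 + p
      · have := hb0 (m - s0) (by omega)
        rwa [show s0 + (m - s0) = m by omega] at this
      · push_neg at h
        have := hper (m - p) (by omega) (by omega)
        rw [show m - p + p = m by omega] at this
        rw [← this]
        exact ih (m - p) (by omega) (by omega) (by omega)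
  have htrue : M s1 = true := by
    have := hb1 0 hℓ1pos
    simpa using this
  have hfalse : M s1 = false := hall s1 (by omega) (by omega)
  rw [htrue] at hfalse
  exact Bool.noConfusion hfalse
end

section
/- An incremental binary sequence M contains, for every index x₁, a block of consecutive 0's and a block of consecutive 1's each of whose first occurrence in M is entirely after position x₁. -/
lemma exists_long_block (M : ℕ → Bool) (hM : Incremental M) :
    ∀ n x, ∃ ℓ > n, ∃ s, Block M x s ℓ := by
  have base : ∀ x, ∃ ℓ > 0, ∃ s, Block M x s ℓ := by
    intro x
    by_cases h : x = M 0
    · exact ⟨1, one_pos, 0, fun k hk => by interval_cases k; simp [h]⟩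
    · have hb : Block M (M 0) 0 1 := fun k hk => by interval_cases k; rfl
      obtain ⟨ℓ', hℓ', j, hj, hbl⟩ := hM (M 0) 0 1 one_pos hb
      have hx : x = !(M 0) := by
        cases x <;> cases h0 : M 0 <;> simp_all
      exact ⟨ℓ', by omega, j, hx ▸ hbl⟩
  intro n
  induction n with
  | zero => exact base
  | succ n ih =>
    intro x
    obtain ⟨ℓ, hℓ, s, hb⟩ := ih (!x)
    obtain ⟨ℓ', hℓ', j, hj, hbl⟩ := hM (!x) s ℓ (by omega) hb
    rw [Bool.not_not] at hbl
    exact ⟨ℓ', by omega, j, hbl⟩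

lemma exists_flip (M : ℕ → Bool) (hM : Incremental M) (x : Bool) (s : ℕ) :
    ∃ k, M (s + k) = !x := by
  by_cases h : M s = x
  · have hb : Block M x s 1 := fun k hk => by interval_cases k; simpa using h
    obtain ⟨ℓ', hℓ', j, hj, hbl⟩ := hM x s 1 one_pos hb
    refine ⟨j - s, ?_⟩
    have : s + (j - s) = j := by omega
    rw [this]
    have := hbl 0 (by omega)
    simpa using this
  · exact ⟨0, by cases hx : M s <;> cases x <;> simp_all⟩

/-- Lemma 21: for every index `x₁`, an incremental sequence contains a block of
0's and a block of 1's whose first occurrences lie entirely after `x₁`. -/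
theorem incremental_blocks_after (M : ℕ → Bool) (hM : Incremental M) (x₁ : ℕ) :
    (∃ ℓ, 0 < ℓ ∧ (∃ s, Block M false s ℓ) ∧ ∀ s, Block M false s ℓ → s > x₁) ∧
    (∃ ℓ, 0 < ℓ ∧ (∃ s, Block M true s ℓ) ∧ ∀ s, Block M true s ℓ → s > x₁) := by
  have main : ∀ x : Bool, ∃ ℓ, 0 < ℓ ∧ (∃ s, Block M x s ℓ) ∧
      ∀ s, Block M x s ℓ → s > x₁ := by
    intro x
    have hex : ∀ s, ∃ k, M (s + k) = !x := exists_flip M hM x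
    let r : ℕ → ℕ := fun s => Nat.find (hex s)
    have hr : ∀ s, M (s + r s) = !x := fun s => Nat.find_spec (hex s)
    let L := (Finset.range (x₁ + 1)).sup r
    obtain ⟨ℓ, hℓ, s, hb⟩ := exists_long_block M hM L x
    refine ⟨ℓ, by omega, ⟨s, hb⟩, ?_⟩
    intro t hbt
    by_contra hle
    push_neg at hle
    have hrt : r t ≤ L := Finset.le_sup (Finset.mem_range.mpr (by omega))
    have := hbt (r t) (by omega)
    rw [hr t] at this
    cases x <;> simp_all
  exact ⟨main false, main true⟩
end

section
/- Let M be an infinite sequence of messages with the property that for every index x there are blocks m^ℓ occurring for the first time after x (e.g., M incremental). If M' is obtained from M by deleting a nonempty finite contiguous subword M_sub, then M' ≠ M (the sequences differ at some position). -/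
/-- There are arbitrarily long blocks starting after `s`. -/
lemma long_blocks (M : ℕ → Bool) (hM : Incremental M) (s : ℕ) :
    ∀ L, ∃ x j ℓ', ℓ' ≥ L + 1 ∧ j > s ∧ Block M x j ℓ' := by
  intro L
  induction L with
  | zero =>
      refine ⟨M (s + 1), s + 1, 1, le_refl _, Nat.lt_succ_self s, ?_⟩
      intro k hk
      interval_cases k
      simp
  | succ n ih =>
      obtain ⟨x, j, ℓ', hℓ', hj, hb⟩ := ih
      obtain ⟨ℓ'', hℓ'', j', hj', hb'⟩ := hM x j ℓ' (by omega) hb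
      exact ⟨!x, j', ℓ'', by omega, by omega, hb'⟩

/-- Lemma 22: deleting a nonempty finite contiguous block from an incremental
sequence yields a different sequence. -/
theorem delete_block_ne (M : ℕ → Bool) (hM : Incremental M) (s ℓ : ℕ) (hℓ : 0 < ℓ) :
    (fun n => if n < s then M n else M (n + ℓ)) ≠ M := by
  intro h
  -- eventual periodicity with period ℓ
  have hper : ∀ n, s ≤ n → M (n + ℓ) = M n := by
    intro n hn
    have := congrFun h n
    simpa [Nat.not_lt.mpr hn] using this
  have hmul : ∀ k n, s ≤ n → M (n + k * ℓ) = M n := by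
    intro k
    induction k with
    | zero => simp
    | succ m ih =>
        intro n hn
        have h1 : n + (m + 1) * ℓ = (n + m * ℓ) + ℓ := by ring
        rw [h1, hper _ (by omega), ih n hn]
  -- a long block after s
  obtain ⟨x, j, ℓ', hℓ', hj, hb⟩ := long_blocks M hM s ℓ
  -- M is constant x on [j, ∞)
  have hconst : ∀ n, j ≤ n → M n = x := by
    intro n hn
    have hr : (n - j) % ℓ < ℓ := Nat.mod_lt _ hℓ
    have key := Nat.mod_add_div' (n - j) ℓ
    have hdecomp : n = (j + (n - j) % ℓ) + ((n - j) / ℓ) * ℓ := by omega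
    rw [hdecomp, hmul _ _ (by omega)]
    exact hb _ (by omega)
  -- apply incrementality to get a block of !x after j
  obtain ⟨ℓ'', hℓ'', j', hj', hb'⟩ := hM x j ℓ' (by omega) hb
  have h1 : M j' = !x := by
    have := hb' 0 (by omega)
    simpa using this
  have h2 : M j' = x := hconst j' (by omega)
  rw [h2] at h1
  simp at h1
end

section
/- In the link-layer receiver protocol where a message is delivered only after being received c̄+1 consecutive times (with the counter reset on a different message), if the sender sends message m exactly k times via the link layer (each send transmits m c̄+1 times) and no other messages or faults occur, then the receiver delivers m at most k times. -/
/-- Receiver state: last message seen (or none) and a counter. -/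
structure RState (α : Type*) where
  last : Option α
  counter : ℕ

/-- One step of the link-layer receiver with threshold `c̄ + 1`: returns the
new state and whether the message was delivered. -/
def rstep {α : Type*} [DecidableEq α] (cbar : ℕ) (s : RState α) (msg : α) :
    RState α × Bool :=
  if s.last = some msg then
    if s.counter + 1 ≥ cbar + 1 then (⟨none, 0⟩, true)
    else (⟨some msg, s.counter + 1⟩, false)
  else (⟨some msg, 1⟩, false)

/-- Number of deliveries made by the receiver when processing a list of messages. -/
def deliverCount {α : Type*} [DecidableEq α] (cbar : ℕ) : RState α → List α → ℕ
  | _, [] => 0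
  | s, m :: rest =>
      (if (rstep cbar s m).2 then 1 else 0) + deliverCount cbar (rstep cbar s m).1 rest

lemma aux_some {α : Type*} [DecidableEq α] (cbar : ℕ) (m : α) :
    ∀ len c, c ≤ cbar + 1 →
      deliverCount cbar (⟨some m, c⟩ : RState α) (List.replicate len m) ≤
        (len + c) / (cbar + 1) := by
  intro len
  induction len using Nat.strong_induction_on with
  | _ len ih =>
    intro c hc
    match len with
    | 0 => simp [deliverCount]
    | n + 1 =>
      rw [List.replicate_succ]
      by_cases h : c + 1 ≥ cbar + 1
      · -- delivery happens
        have hstep : rstep cbar (⟨some m, c⟩ : RState α) m = (⟨none, 0⟩, true) := by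
          simp [rstep, h]
        rw [deliverCount, hstep]
        simp only [if_true]
        match n with
        | 0 =>
          have h1 : 1 ≤ (0 + 1 + c) / (cbar + 1) :=
            (Nat.one_le_div_iff (Nat.succ_pos cbar)).mpr (by omega)
          simpa [deliverCount] using h1
        | n' + 1 =>
          rw [List.replicate_succ]
          have hstep2 : rstep cbar (⟨none, 0⟩ : RState α) m = (⟨some m, 1⟩, false) := by
            simp [rstep]
          rw [deliverCount, hstep2]
          simp only [Bool.false_eq_true, if_false]
          have hih := ih n' (by omega) 1 (by omega)
          have hb : (n' + 1) / (cbar + 1) + 1 ≤ (n' + 1 + 1 + c) / (cbar + 1) := by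
            have h1 : (n' + 1) / (cbar + 1) + 1 = (n' + 1 + (cbar + 1)) / (cbar + 1) :=
              (Nat.add_div_right _ (Nat.succ_pos cbar)).symm
            rw [h1]
            exact Nat.div_le_div_right (by omega)
          omega
      · -- no delivery, counter increments
        have hstep : rstep cbar (⟨some m, c⟩ : RState α) m = (⟨some m, c + 1⟩, false) := by
          simp [rstep, h]
        rw [deliverCount, hstep]
        simp only [Bool.false_eq_true, if_false]
        have hih := ih n (by omega) (c + 1) (by omega)
        have he : n + (c + 1) = n + 1 + c := by omega
        rw [he] at hih
        omega

/-- Link Layer Claim 3 (no duplication): if the sender sends `m` exactly `k`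
times (so the receiver receives at most `(c̄+1)·k` copies of `m`, and nothing
else, starting from the clean state), the receiver delivers at most `k` times. -/
theorem no_duplication {α : Type*} [DecidableEq α] (cbar k len : ℕ) (m : α)
    (hlen : len ≤ (cbar + 1) * k) :
    deliverCount cbar (⟨none, 0⟩ : RState α) (List.replicate len m) ≤ k := by
  match len with
  | 0 => simp [deliverCount]
  | n + 1 =>
    rw [List.replicate_succ]
    have hstep : rstep cbar (⟨none, 0⟩ : RState α) m = (⟨some m, 1⟩, false) := by
      simp [rstep]
    rw [deliverCount, hstep]
    simp only [Bool.false_eq_true, if_false]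
    have h1 := aux_some cbar m n 1 (by omega)
    have h2 : (n + 1) / (cbar + 1) ≤ k := by
      have h3 := Nat.div_le_div_right (c := cbar + 1) hlen
      rwa [Nat.mul_div_cancel_left _ (Nat.succ_pos cbar)] at h3
    omega
end

section
/- In the link-layer receiver state machine with threshold c̄+1 and an initial adversarial state (arbitrary LastMessage and Counter ≤ c̄+1, plus at most c̄ adversarial messages initially in the channel), at most 3 of the messages delivered by the receiver can be ghost messages (messages never sent by the sender after the fault); in particular the 4th delivered message was genuinely sent. -/
/-- Count ghost deliveries while processing a stream of tagged messages
(`true` = this copy comes from a genuine send). `seen` records messages for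
which a genuine copy has already appeared; a delivery is ghost if no genuine
send of that message precedes it. -/
def ghostCount {α : Type*} [DecidableEq α] (cbar : ℕ) :
    RState α → List α → List (α × Bool) → ℕ
  | _, _, [] => 0
  | s, seen, (m, g) :: rest =>
      let seen' := if g then m :: seen else seen
      (if (rstep cbar s m).2 ∧ m ∉ seen' then 1 else 0) +
        ghostCount cbar (rstep cbar s m).1 seen' rest


/-!
Amortization. Call the counter of the receiver its *credit* when the stored message has not
been genuinely sent so far. A ghost delivery of `m` completes a run of `c̄ + 1` copies of `m`
none of which is genuine, so every copy in the run is either fake or part of the initial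
credit. Each fake copy raises the credit by at most one, each genuine copy resets it to zero, and
a ghost delivery spends `c̄ + 1` of it. The initial credit is at most `c̄ + 1` and there are at
most `c̄` fakes, so `(c̄ + 1) · ghosts ≤ 2c̄ + 1`: there is in fact at most one ghost.
-/

section GhostCredit

variable {α : Type*} [DecidableEq α]

def ghostCredit (s : RState α) (seen : List α) : ℕ :=
  match s.last with
  | some m => if m ∈ seen then 0 else s.counter
  | none => 0

lemma ghostCredit_le_counter (s : RState α) (seen : List α) : ghostCredit s seen ≤ s.counter := by
  unfold ghostCredit
  split
  · split <;> omega
  · omega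

lemma ghostCredit_of_last_eq_some {s : RState α} {m : α} (h : s.last = some m) (seen : List α) :
    ghostCredit s seen = if m ∈ seen then 0 else s.counter := by
  rw [ghostCredit, h]

lemma ghostCredit_rstep_genuine (cbar : ℕ) (s : RState α) (seen : List α) (m : α) :
    ghostCredit (rstep cbar s m).1 (m :: seen) = 0 := by
  unfold rstep
  split_ifs <;> simp [ghostCredit]

lemma ghostCredit_rstep_fake (cbar : ℕ) (s : RState α) (seen : List α) (m : α) :
    (cbar + 1) * (if (rstep cbar s m).2 ∧ m ∉ seen then 1 else 0) +
        ghostCredit (rstep cbar s m).1 seen ≤ 1 + ghostCredit s seen := by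
  by_cases hlast : s.last = some m
  · rw [ghostCredit_of_last_eq_some hlast]
    by_cases hfull : cbar ≤ s.counter
    · have hstep : rstep cbar s m = (⟨none, 0⟩, true) := by simp [rstep, hlast, hfull]
      by_cases hm : m ∈ seen
      · simp [hstep, hm, ghostCredit]
      · simp [hstep, hm, ghostCredit]
        omega
    · have hstep : rstep cbar s m = (⟨some m, s.counter + 1⟩, false) := by
        simp [rstep, hlast, hfull]
      by_cases hm : m ∈ seen <;> simp [hstep, hm, ghostCredit]
  · have hstep : rstep cbar s m = (⟨some m, 1⟩, false) := by simp [rstep, hlast]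
    have hcredit : ghostCredit (⟨some m, 1⟩ : RState α) seen ≤ 1 := ghostCredit_le_counter _ _
    simp only [hstep, Bool.false_eq_true, false_and, if_false]
    omega

lemma mul_ghostCount_le (cbar : ℕ) (L : List (α × Bool)) (s : RState α) (seen : List α) :
    (cbar + 1) * ghostCount cbar s seen L ≤
      (L.filter (fun e => !e.2)).length + ghostCredit s seen := by
  induction L generalizing s seen with
  | nil => simp [ghostCount]
  | cons e L ih =>
    obtain ⟨m, g⟩ := e
    cases g with
    | true =>
      have hstep := ghostCredit_rstep_genuine cbar s seen m
      have hrest := ih (rstep cbar s m).1 (m :: seen)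
      simp only [ghostCount, if_true, List.mem_cons_self, not_true_eq_false, and_false,
        if_false, zero_add, List.filter_cons, Bool.not_true, Bool.false_eq_true] at hrest ⊢
      omega
    | false =>
      have hstep := ghostCredit_rstep_fake cbar s seen m
      have hrest := ih (rstep cbar s m).1 seen
      simp only [ghostCount, Bool.false_eq_true, if_false, List.filter_cons, Bool.not_false,
        if_true, List.length_cons] at hrest ⊢
      rw [Nat.mul_add]
      omega

end GhostCredit

theorem at_most_three_ghosts_general {α : Type*} [DecidableEq α] (cbar : ℕ)
    (s₀ : RState α) (hcnt : s₀.counter ≤ cbar + 1)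
    (L : List (α × Bool))
    (hfake : (L.filter (fun e => !e.2)).length ≤ cbar) :
    ghostCount cbar s₀ [] L ≤ 3 := by
  have hbound := mul_ghostCount_le cbar L s₀ []
  have hcredit := ghostCredit_le_counter s₀ []
  have hle_one : ghostCount cbar s₀ [] L ≤ 1 := by
    by_contra! htwo
    have := Nat.mul_le_mul_left (cbar + 1) htwo
    omega
  omega

/-- Link Layer Claim 5 (at most three ghost messages): starting from an
arbitrary adversarial state (counter at most `c̄+1`), with at most `c̄`
adversarial (fake) copies interleaved into a stream whose genuine copies are
exactly the concatenation of blocks of `c̄+1` consecutive copies of each sent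
message, at most 3 delivered messages are ghost. -/
theorem at_most_three_ghosts {α : Type*} [DecidableEq α] (cbar : ℕ)
    (s₀ : RState α) (hcnt : s₀.counter ≤ cbar + 1)
    (L : List (α × Bool))
    (hfake : (L.filter (fun e => !e.2)).length ≤ cbar)
    (sends : List α)
    (hgen : L.filterMap (fun e => if e.2 then some e.1 else none) =
      (sends.map (fun m => List.replicate (cbar + 1) m)).flatten) :
    ghostCount cbar s₀ [] L ≤ 3 :=
  at_most_three_ghosts_general cbar s₀ hcnt L hfake
end
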